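/- arXiv:1904.07525 — 4 statements merged into one kernel-verified Lean document; each statement's English description precedes it below -/
import Mathlib

section
/- Let R > 0, σ > 0, and let c₁ be the smallest positive zero of the function φ(x) = x·tan(x) − Rσ. Then c₁ ∈ (0, π/2) and c₁² > π²Rσ/(π² + 4Rσ). -/
/-!
Becker–Stark: `gap x = π² x cos x − (π² − 4x²) sin x` has derivative `x · gapDerivQuot x`, where
`gapDerivQuot` is strictly concave on `[0, π/2]` and vanishes at `0`, so it changes sign at most
once, from `+` to `−`. Hence `gap` first rises and then falls, and `gap 0 = gap (π/2) = 0` forces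
`gap > 0` on `(0, π/2)`.

Since `x tan x` runs continuously from `0` to `∞` on `(0, π/2)`, it takes the value `Rσ` there, so
`c₁ < π/2`; then `Rσ = c₁ tan c₁ < π² c₁² / (π² − 4c₁²)` by Becker–Stark, which rearranges to the
bound.
-/

open Real Set Filter Topology

theorem pos_of_eq_zero_of_deriv_pos_or_neg {f f' : ℝ → ℝ} {a b x : ℝ}
    (hf : ContinuousOn f (Icc a b)) (hf' : ∀ t ∈ Ioo a b, HasDerivAt f (f' t) t)
    (ha : f a = 0) (hb : f b = 0) (hx : x ∈ Ioo a b)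
    (hsign : (∀ t ∈ Ioo a x, 0 < f' t) ∨ ∀ t ∈ Ioo x b, f' t < 0) : 0 < f x := by
  rcases hsign with hpos | hneg
  · have hmono : StrictMonoOn f (Icc a x) :=
      strictMonoOn_of_hasDerivWithinAt_pos (convex_Icc a x)
        (hf.mono (Icc_subset_Icc_right hx.2.le))
        (fun t ht ↦ by
          rw [interior_Icc] at ht ⊢
          exact (hf' t ⟨ht.1, ht.2.trans hx.2⟩).hasDerivWithinAt)
        (fun t ht ↦ hpos t (by rwa [interior_Icc] at ht))
    simpa [ha] using hmono (left_mem_Icc.2 hx.1.le) (right_mem_Icc.2 hx.1.le) hx.1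
  · have hanti : StrictAntiOn f (Icc x b) :=
      strictAntiOn_of_hasDerivWithinAt_neg (convex_Icc x b)
        (hf.mono (Icc_subset_Icc_left hx.1.le))
        (fun t ht ↦ by
          rw [interior_Icc] at ht ⊢
          exact (hf' t ⟨hx.1.trans ht.1, ht.2⟩).hasDerivWithinAt)
        (fun t ht ↦ hneg t (by rwa [interior_Icc] at ht))
    simpa [hb] using hanti (left_mem_Icc.2 hx.2.le) (right_mem_Icc.2 hx.2.le) hx.2

namespace BeckerStark

noncomputable def gap (x : ℝ) : ℝ := π ^ 2 * x * cos x - (π ^ 2 - 4 * x ^ 2) * sin x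

noncomputable def gapDerivQuot (x : ℝ) : ℝ := (8 - π ^ 2) * sin x + 4 * x * cos x

theorem hasDerivAt_gap (x : ℝ) : HasDerivAt gap (x * gapDerivQuot x) x := by
  have h := (((hasDerivAt_id x).const_mul (π ^ 2)).mul (hasDerivAt_cos x)).sub
    ((((hasDerivAt_pow 2 x).const_mul 4).const_sub (π ^ 2)).mul (hasDerivAt_sin x))
  exact h.congr_deriv (by simp only [gapDerivQuot, id_eq]; norm_num; ring)

theorem hasDerivAt_gapDerivQuot (x : ℝ) :
    HasDerivAt gapDerivQuot ((12 - π ^ 2) * cos x - 4 * x * sin x) x := by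
  have h := ((hasDerivAt_sin x).const_mul (8 - π ^ 2)).add
    (((hasDerivAt_id x).const_mul 4).mul (hasDerivAt_cos x))
  exact h.congr_deriv (by simp only [id_eq]; ring)

theorem deriv2_gapDerivQuot (x : ℝ) :
    deriv^[2] gapDerivQuot x = (π ^ 2 - 16) * sin x - 4 * x * cos x := by
  have hderiv : deriv gapDerivQuot = fun x ↦ (12 - π ^ 2) * cos x - 4 * x * sin x :=
    funext fun x ↦ (hasDerivAt_gapDerivQuot x).deriv
  have h : HasDerivAt (fun x ↦ (12 - π ^ 2) * cos x - 4 * x * sin x)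
      ((π ^ 2 - 16) * sin x - 4 * x * cos x) x :=
    (((hasDerivAt_cos x).const_mul (12 - π ^ 2)).sub
      (((hasDerivAt_id x).const_mul 4).mul (hasDerivAt_sin x))).congr_deriv
      (by simp only [id_eq]; ring)
  rw [Function.iterate_succ_apply, Function.iterate_one, hderiv, h.deriv]

theorem strictConcaveOn_gapDerivQuot : StrictConcaveOn ℝ (Icc 0 (π / 2)) gapDerivQuot := by
  refine strictConcaveOn_of_deriv2_neg (convex_Icc _ _)
    (fun x _ ↦ (hasDerivAt_gapDerivQuot x).continuousAt.continuousWithinAt) fun x hx ↦ ?_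
  rw [interior_Icc] at hx
  have hsin : 0 < sin x := sin_pos_of_pos_of_lt_pi hx.1 (by linarith [hx.2, pi_pos])
  have hcos : 0 < cos x := cos_pos_of_mem_Ioo ⟨by linarith [hx.1, pi_pos], hx.2⟩
  have hpi : π ^ 2 < 16 := by nlinarith [pi_lt_four, pi_pos]
  rw [deriv2_gapDerivQuot]
  nlinarith [mul_pos hx.1 hcos, mul_pos (sub_pos.2 hpi) hsin]

theorem gapDerivQuot_neg_of_nonpos {y t : ℝ} (hy : 0 < y) (hyt : y < t) (ht : t ≤ π / 2)
    (hgy : gapDerivQuot y ≤ 0) : gapDerivQuot t < 0 := by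
  have h0 : gapDerivQuot 0 = 0 := by simp [gapDerivQuot]
  have hsecant := strictConcaveOn_gapDerivQuot.secant_strict_mono (a := 0)
    ⟨le_rfl, by linarith [pi_pos]⟩ ⟨hy.le, hyt.le.trans ht⟩ ⟨(hy.trans hyt).le, ht⟩
    hy.ne' (hy.trans hyt).ne' hyt
  simp only [h0, sub_zero] at hsecant
  have : gapDerivQuot t / t < 0 := hsecant.trans_le (div_nonpos_of_nonpos_of_nonneg hgy hy.le)
  exact ((div_neg_iff.1 this).resolve_left fun h ↦ by linarith [h.2]).1

theorem gap_pos {x : ℝ} (hx : x ∈ Ioo 0 (π / 2)) : 0 < gap x := by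
  refine pos_of_eq_zero_of_deriv_pos_or_neg
    (fun t _ ↦ (hasDerivAt_gap t).continuousAt.continuousWithinAt)
    (fun t _ ↦ hasDerivAt_gap t) (by simp [gap]) (by simp [gap]; ring) hx ?_
  by_cases hpos : ∀ t ∈ Ioo 0 x, 0 < gapDerivQuot t
  · exact Or.inl fun t ht ↦ mul_pos ht.1 (hpos t ht)
  · push Not at hpos
    obtain ⟨y, hy, hgy⟩ := hpos
    exact Or.inr fun t ht ↦ mul_neg_of_pos_of_neg (hx.1.trans ht.1)
      (gapDerivQuot_neg_of_nonpos hy.1 (hy.2.trans ht.1) ht.2.le hgy)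

end BeckerStark

theorem Real.tan_lt_becker_stark {x : ℝ} (hx : x ∈ Ioo 0 (π / 2)) :
    tan x < π ^ 2 * x / (π ^ 2 - 4 * x ^ 2) := by
  have hcos : 0 < cos x := cos_pos_of_mem_Ioo ⟨by linarith [hx.1, pi_pos], hx.2⟩
  have hden : 0 < π ^ 2 - 4 * x ^ 2 := by nlinarith [hx.1, hx.2]
  have hgap := BeckerStark.gap_pos hx
  rw [BeckerStark.gap] at hgap
  rw [tan_eq_sin_div_cos, div_lt_div_iff₀ hcos hden]
  linarith

theorem Real.exists_mul_tan_eq {c : ℝ} (hc : 0 < c) : ∃ x ∈ Ioo 0 (π / 2), x * tan x = c := by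
  have hcont : ContinuousOn (fun x ↦ x * tan x) (Ioo 0 (π / 2)) :=
    continuousOn_id.mul fun x hx ↦ (continuousAt_tan.2
      (cos_pos_of_mem_Ioo ⟨by linarith [hx.1, pi_pos], hx.2⟩).ne').continuousWithinAt
  have hzero : Tendsto (fun x ↦ x * tan x) (𝓝[>] 0) (𝓝 0) := by
    have : Tendsto (fun x ↦ x * tan x) (𝓝 0) (𝓝 (0 * tan 0)) :=
      continuous_id.continuousAt.mul (continuousAt_tan.2 (by simp))
    simpa using this.mono_left nhdsWithin_le_nhds
  have hinfty : Tendsto (fun x ↦ x * tan x) (𝓝[<] (π / 2)) atTop :=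
    (tendsto_nhdsWithin_of_tendsto_nhds tendsto_id).pos_mul_atTop (by linarith [pi_pos])
      tendsto_tan_pi_div_two
  obtain ⟨x, hx, hxc⟩ := isPreconnected_Ioo.intermediate_value_Ioi
    (le_principal_iff.2 (Ioo_mem_nhdsGT (half_pos pi_pos)))
    (le_principal_iff.2 (Ioo_mem_nhdsLT (half_pos pi_pos)))
    hcont hzero hinfty hc
  exact ⟨x, hx, hxc⟩

/-- Let R > 0, σ > 0, and let c₁ be the smallest positive zero of
φ(x) = x·tan x − Rσ. Then c₁ ∈ (0, π/2) and c₁² > π²Rσ/(π² + 4Rσ). -/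
theorem stmt0 (R σ c₁ : ℝ) (hR : 0 < R) (hσ : 0 < σ)
    (hc : IsLeast {x : ℝ | 0 < x ∧ x * Real.tan x - R * σ = 0} c₁) :
    c₁ ∈ Set.Ioo 0 (Real.pi / 2) ∧
      c₁ ^ 2 > Real.pi ^ 2 * R * σ / (Real.pi ^ 2 + 4 * R * σ) := by
  obtain ⟨⟨hc₁_pos, hc₁_root⟩, hc₁_least⟩ := hc
  obtain ⟨z, hz, hz_root⟩ := exists_mul_tan_eq (mul_pos hR hσ)
  have hc₁_mem : c₁ ∈ Ioo 0 (π / 2) :=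
    ⟨hc₁_pos, (hc₁_least ⟨hz.1, sub_eq_zero.2 hz_root⟩).trans_lt hz.2⟩
  refine ⟨hc₁_mem, ?_⟩
  have hden : 0 < π ^ 2 - 4 * c₁ ^ 2 := by nlinarith [hc₁_mem.1, hc₁_mem.2]
  have hbound : R * σ < π ^ 2 * c₁ ^ 2 / (π ^ 2 - 4 * c₁ ^ 2) :=
    calc R * σ = c₁ * tan c₁ := by linarith
      _ < c₁ * (π ^ 2 * c₁ / (π ^ 2 - 4 * c₁ ^ 2)) :=
        mul_lt_mul_of_pos_left (tan_lt_becker_stark hc₁_mem) hc₁_pos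
      _ = π ^ 2 * c₁ ^ 2 / (π ^ 2 - 4 * c₁ ^ 2) := by ring
  rw [lt_div_iff₀ hden] at hbound
  rw [gt_iff_lt, div_lt_iff₀ (by positivity)]
  linarith
end

section
/- For all x ∈ (0, π/2), one has tan(x) < π²·x/(π² − 4x²). -/
/-!
Put `f t = π² t cos t − (π² − 4t²) sin t`, so that the inequality says `f x > 0`. Both endpoints
are zeros of `f`, and `f' t = (π² − 8) t² cos t · (4 / (π² − 8) − tan t / t)`. Since `tan t / t`
is strictly increasing, `f'` changes sign at most once, from positive to negative, so `f` is
unimodal on `[0, π/2]` and hence positive inside.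
-/

open Real Set

theorem min_lt_of_hasDerivAt_mul_sub_of_strictMonoOn {f w φ : ℝ → ℝ} {a b c x : ℝ}
    (hf : ContinuousOn f (Icc a b)) (hf' : ∀ t ∈ Ioo a b, HasDerivAt f (w t * (c - φ t)) t)
    (hw : ∀ t ∈ Ioo a b, 0 < w t) (hφ : StrictMonoOn φ (Ioo a b)) (hx : x ∈ Ioo a b) :
    min (f a) (f b) < f x := by
  obtain ⟨hax, hxb⟩ := hx
  rcases lt_or_ge (φ x) c with hφx | hφx
  · have hmono : StrictMonoOn f (Icc a x) := by
      refine strictMonoOn_of_hasDerivWithinAt_pos (convex_Icc a x)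
        (f' := fun t ↦ w t * (c - φ t)) (hf.mono (Icc_subset_Icc_right hxb.le))
        (fun t ht ↦ ?_) fun t ht ↦ ?_ <;> rw [interior_Icc] at ht
      · exact (hf' t ⟨ht.1, ht.2.trans hxb⟩).hasDerivWithinAt
      · exact mul_pos (hw t ⟨ht.1, ht.2.trans hxb⟩)
          (sub_pos.2 ((hφ ⟨ht.1, ht.2.trans hxb⟩ ⟨hax, hxb⟩ ht.2).trans hφx))
    exact (min_le_left _ _).trans_lt (hmono (left_mem_Icc.2 hax.le) (right_mem_Icc.2 hax.le) hax)
  · have hanti : StrictAntiOn f (Icc x b) := by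
      refine strictAntiOn_of_hasDerivWithinAt_neg (convex_Icc x b)
        (f' := fun t ↦ w t * (c - φ t)) (hf.mono (Icc_subset_Icc_left hax.le))
        (fun t ht ↦ ?_) fun t ht ↦ ?_ <;> rw [interior_Icc] at ht
      · exact (hf' t ⟨hax.trans ht.1, ht.2⟩).hasDerivWithinAt
      · exact mul_neg_of_pos_of_neg (hw t ⟨hax.trans ht.1, ht.2⟩)
          (sub_neg.2 (hφx.trans_lt (hφ ⟨hax, hxb⟩ ⟨hax.trans ht.1, ht.2⟩ ht.1)))
    exact (min_le_right _ _).trans_lt (hanti (left_mem_Icc.2 hxb.le) (right_mem_Icc.2 hxb.le) hxb)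

theorem Real.cos_pos_of_mem_Ioo_zero_pi_div_two {t : ℝ} (ht : t ∈ Ioo 0 (π / 2)) : 0 < cos t :=
  cos_pos_of_mem_Ioo ⟨by linarith [ht.1, pi_pos], ht.2⟩

theorem Real.strictMonoOn_tan_div_self : StrictMonoOn (fun t ↦ tan t / t) (Ioo 0 (π / 2)) := by
  refine strictMonoOn_of_hasDerivWithinAt_pos (convex_Ioo 0 (π / 2))
    (f' := fun t ↦ (t - sin t * cos t) / (t ^ 2 * cos t ^ 2)) (fun t ht ↦ ?_) (fun t ht ↦ ?_)
    fun t ht ↦ ?_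
  · have hcos := cos_pos_of_mem_Ioo_zero_pi_div_two ht
    exact ((continuousAt_tan.2 hcos.ne').div continuousAt_id ht.1.ne').continuousWithinAt
  · rw [interior_Ioo] at ht
    have hcos := cos_pos_of_mem_Ioo_zero_pi_div_two ht
    refine (((hasDerivAt_tan hcos.ne').div (hasDerivAt_id t) ht.1.ne').congr_deriv
      ?_).hasDerivWithinAt
    rw [tan_eq_sin_div_cos, id]
    field_simp
  · rw [interior_Ioo] at ht
    have hcos := cos_pos_of_mem_Ioo_zero_pi_div_two ht
    have hsin_mul_cos : sin t * cos t < t := by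
      linarith [sin_two_mul t, sin_lt (by linarith [ht.1] : 0 < 2 * t)]
    exact div_pos (by linarith) (mul_pos (pow_pos ht.1 2) (pow_pos hcos 2))

theorem Real.hasDerivAt_beckerStark_gap {t : ℝ} (ht : t ∈ Ioo 0 (π / 2)) :
    HasDerivAt (fun t ↦ π ^ 2 * t * cos t - (π ^ 2 - 4 * t ^ 2) * sin t)
      ((π ^ 2 - 8) * t ^ 2 * cos t * (4 / (π ^ 2 - 8) - tan t / t)) t := by
  have ht0 : t ≠ 0 := ht.1.ne'
  have hcos : cos t ≠ 0 := (cos_pos_of_mem_Ioo_zero_pi_div_two ht).ne'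
  have hpi : π ^ 2 - 8 ≠ 0 := by nlinarith [pi_gt_three]
  have hpoly := (((hasDerivAt_id t).const_mul (π ^ 2)).mul (hasDerivAt_cos t)).sub
    ((((hasDerivAt_pow 2 t).const_mul 4).const_sub (π ^ 2)).mul (hasDerivAt_sin t))
  refine hpoly.congr_deriv ?_
  rw [tan_eq_sin_div_cos, id]
  field_simp
  ring

/-- Becker–Stark inequality: for x ∈ (0, π/2), tan x < π²x/(π² − 4x²). -/
theorem stmt1 (x : ℝ) (hx : x ∈ Set.Ioo 0 (Real.pi / 2)) :
    Real.tan x < Real.pi ^ 2 * x / (Real.pi ^ 2 - 4 * x ^ 2) := by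
  have hpi : 8 < π ^ 2 := by nlinarith [pi_gt_three]
  have hcos : 0 < cos x := cos_pos_of_mem_Ioo_zero_pi_div_two hx
  have hden : 0 < π ^ 2 - 4 * x ^ 2 := by nlinarith [hx.1, hx.2]
  have hgap : (π ^ 2 - 4 * x ^ 2) * sin x < π ^ 2 * x * cos x := by
    have hweight (t : ℝ) (ht : t ∈ Ioo 0 (π / 2)) : 0 < (π ^ 2 - 8) * t ^ 2 * cos t :=
      mul_pos (mul_pos (by linarith) (pow_pos ht.1 2)) (cos_pos_of_mem_Ioo_zero_pi_div_two ht)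
    have h := min_lt_of_hasDerivAt_mul_sub_of_strictMonoOn (by fun_prop)
      (fun t ht ↦ hasDerivAt_beckerStark_gap ht) hweight strictMonoOn_tan_div_self hx
    norm_num [div_pow, mul_div_cancel₀] at h
    exact h
  rw [tan_eq_sin_div_cos, div_lt_div_iff₀ hcos hden]
  linarith
end

section
/- Let A > 0, σ with 0 < σ ≤ A, R > 0, and λ < A². Set q = √(A² − λ) and suppose λ = σ·(A + q·coth(qR)) with q > 0. Then λ ≥ 2σA − σ². -/
/-!
Since `coth > 1` on `(0, ∞)`, the equation gives `λ ≥ σ (A + q)`. Writing `λ = A² - q²` and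
cancelling `A + q > 0` yields `q ≤ A - σ`, hence `q² ≤ (A - σ)²`, which is the claim
`A² - q² ≥ 2σA - σ²`.
-/

open Real

lemma one_lt_cosh_div_sinh {x : ℝ} (hx : 0 < x) : 1 < cosh x / sinh x := by
  rw [one_lt_div (sinh_pos_iff.mpr hx)]
  exact sinh_lt_cosh x

lemma two_mul_mul_sub_sq_le_sq_sub_sq {A σ q : ℝ} (hAq : 0 < A + q) (hq : 0 ≤ q)
    (h : σ * (A + q) ≤ A ^ 2 - q ^ 2) : 2 * σ * A - σ ^ 2 ≤ A ^ 2 - q ^ 2 := by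
  have hσ : σ ≤ A - q :=
    le_of_mul_le_mul_right (by linarith [show A ^ 2 - q ^ 2 = (A - q) * (A + q) by ring]) hAq
  have hsq : q ^ 2 ≤ (A - σ) ^ 2 := pow_le_pow_left₀ hq (by linarith) 2
  linarith

theorem stmt3_general (A σ R lam q : ℝ) (hσ0 : 0 < σ) (hσA : σ ≤ A)
    (hR : 0 < R) (hq : q = Real.sqrt (A ^ 2 - lam))
    (hqpos : 0 < q)
    (heq : lam = σ * (A + q * (Real.cosh (q * R) / Real.sinh (q * R)))) :
    2 * σ * A - σ ^ 2 ≤ lam := by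
  have hlam : lam = A ^ 2 - q ^ 2 := by
    rw [hq, sq_sqrt (sqrt_pos.mp (hq ▸ hqpos)).le]
    ring
  have hbound : σ * (A + q) ≤ lam := by
    rw [heq]
    gcongr
    exact le_mul_of_one_le_right hqpos.le (one_lt_cosh_div_sinh (mul_pos hqpos hR)).le
  rw [hlam] at hbound ⊢
  exact two_mul_mul_sub_sq_le_sq_sub_sq (by linarith) hqpos.le hbound

/-- If 0 < σ ≤ A, R > 0, λ < A², q = √(A²−λ) > 0 and λ = σ(A + q coth(qR)),
then λ ≥ 2σA − σ². -/
theorem stmt3 (A σ R lam q : ℝ) (hA : 0 < A) (hσ0 : 0 < σ) (hσA : σ ≤ A)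
    (hR : 0 < R) (hlam : lam < A ^ 2) (hq : q = Real.sqrt (A ^ 2 - lam))
    (hqpos : 0 < q)
    (heq : lam = σ * (A + q * (Real.cosh (q * R) / Real.sinh (q * R)))) :
    2 * σ * A - σ ^ 2 ≤ lam :=
  stmt3_general A σ R lam q hσ0 hσA hR hq hqpos heq
end

section
/- Let Θ : [0,R] → ℝ be smooth and positive on [0,R), let σ > 0, λ ∈ ℝ, and let u : [0,R] → ℝ be a positive solution of u'' + (Θ'/Θ)u' + λu = 0 with u'(0) = σ·u(0) and u'(R) = 0. If (log Θ)'' < 0 on [0,R) and u' > 0 on [0,R), then the function σ(r) = u'(r)/u(r) satisfies 0 ≤ σ(r) ≤ σ for all r ∈ [0,R]. -/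
/-- Riccati bound: for a positive solution u of u'' + (Θ'/Θ)u' + λu = 0 on
[0,R] with u'(0) = σu(0) (σ > 0) and u'(R) = 0, strict log-concavity of Θ and
u' > 0 on [0,R) imply 0 ≤ u'/u ≤ σ on [0,R]. -/
theorem stmt10 (R σ lam : ℝ) (Θ u : ℝ → ℝ) (hR : 0 < R) (hσ : 0 < σ)
    (hΘs : ContDiff ℝ (⊤ : ℕ∞) Θ) (hΘp : ∀ r ∈ Set.Ico (0 : ℝ) R, 0 < Θ r)
    (hu2 : ContDiff ℝ 2 u) (hupos : ∀ r ∈ Set.Icc (0 : ℝ) R, 0 < u r)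
    (hode : ∀ r ∈ Set.Icc (0 : ℝ) R,
      deriv (deriv u) r + (deriv Θ r / Θ r) * deriv u r + lam * u r = 0)
    (hb0 : deriv u 0 = σ * u 0) (hbR : deriv u R = 0)
    (hlc : ∀ r ∈ Set.Ico (0 : ℝ) R,
      deriv (deriv (fun x => Real.log (Θ x))) r < 0)
    (hu' : ∀ r ∈ Set.Ico (0 : ℝ) R, 0 < deriv u r) :
    ∀ r ∈ Set.Icc (0 : ℝ) R, 0 ≤ deriv u r / u r ∧ deriv u r / u r ≤ σ := by
  have hud : Differentiable ℝ u := hu2.differentiable (by norm_num)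
  have hu'd : Differentiable ℝ (deriv u) := by
    have h2 : ContDiff ℝ ((1:WithTop ℕ∞)+1) u := by exact_mod_cast hu2
    exact (contDiff_succ_iff_deriv.mp h2).2.2.differentiable one_ne_zero
  have hΘd : Differentiable ℝ Θ := hΘs.differentiable (by simp)
  have hΘ'd : Differentiable ℝ (deriv Θ) := by
    have h2 : ContDiff ℝ ((1:WithTop ℕ∞)+1) Θ := hΘs.of_le (WithTop.coe_le_coe.mpr le_top)
    exact (contDiff_succ_iff_deriv.mp h2).2.2.differentiable one_ne_zero
  set φ : ℝ → ℝ := fun r =>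
      -(deriv Θ r * deriv u r * u r) - lam * (Θ r * u r ^ 2) - Θ r * deriv u r ^ 2
    with hφdef
  set D : ℝ → ℝ := fun r =>
      -((deriv (deriv Θ) r * deriv u r + deriv Θ r * deriv (deriv u) r) * u r
          + deriv Θ r * deriv u r * deriv u r)
        - lam * (deriv Θ r * u r ^ 2 + Θ r * (2 * u r * deriv u r))
        - (deriv Θ r * deriv u r ^ 2 + Θ r * (2 * deriv u r * deriv (deriv u) r))
    with hDdef
  have hDφ : ∀ r, HasDerivAt φ (D r) r := by
    intro r
    have hΘ : HasDerivAt Θ (deriv Θ r) r := (hΘd r).hasDerivAt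
    have hΘ' : HasDerivAt (deriv Θ) (deriv (deriv Θ) r) r := (hΘ'd r).hasDerivAt
    have hu : HasDerivAt u (deriv u r) r := (hud r).hasDerivAt
    have hu' : HasDerivAt (deriv u) (deriv (deriv u) r) r := (hu'd r).hasDerivAt
    have husq : HasDerivAt (fun x => u x ^ 2) (2 * u r * deriv u r) r := by
      simpa [mul_comm, mul_assoc, mul_left_comm] using (hu.fun_pow 2)
    have hu'sq : HasDerivAt (fun x => deriv u x ^ 2)
        (2 * deriv u r * deriv (deriv u) r) r := by
      simpa [mul_comm, mul_assoc, mul_left_comm] using (hu'.fun_pow 2)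
    exact (((hΘ'.mul hu').mul hu).neg.sub ((hΘ.mul husq).const_mul lam)).sub
      (hΘ.mul hu'sq)
  have hφcont : Continuous φ := by
    exact continuous_iff_continuousAt.2 fun r => (hDφ r).continuousAt
  -- second derivative of log Θ at interior points
  have hkey : ∀ r ∈ Set.Ioo (0 : ℝ) R, 0 < deriv φ r := by
    intro r hr
    have hrIco : r ∈ Set.Ico (0 : ℝ) R := ⟨le_of_lt hr.1, hr.2⟩
    have hrIcc : r ∈ Set.Icc (0 : ℝ) R := ⟨le_of_lt hr.1, le_of_lt hr.2⟩
    have hΘr : 0 < Θ r := hΘp r hrIco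
    have hur : 0 < u r := hupos r hrIcc
    have hu'r : 0 < deriv u r := hu' r hrIco
    -- eventual positivity of Θ near r
    have hev : ∀ᶠ x in nhds r, 0 < Θ x :=
      (hΘd.continuous.continuousAt (x := r)).eventually (eventually_gt_nhds hΘr)
    have hev2 : (fun x => deriv Θ x / Θ x) =ᶠ[nhds r]
        deriv (fun x => Real.log (Θ x)) := by
      filter_upwards [hev] with x hx
      exact (((hΘd x).hasDerivAt.log hx.ne').deriv).symm
    have hlogd : deriv (deriv (fun x => Real.log (Θ x))) r
        = (deriv (deriv Θ) r * Θ r - deriv Θ r * deriv Θ r) / Θ r ^ 2 := by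
      rw [← hev2.deriv_eq]
      exact (((hΘ'd r).hasDerivAt.div (hΘd r).hasDerivAt hΘr.ne')).deriv
    have hlc' : deriv (deriv Θ) r * Θ r - deriv Θ r * deriv Θ r < 0 := by
      have := hlc r hrIco
      rw [hlogd] at this
      have h2 : (0:ℝ) < Θ r ^ 2 := by positivity
      rcases div_neg_iff.mp this with ⟨_,hd⟩ | ⟨h,_⟩
      · linarith
      · exact h
    -- ODE at r
    have hODE : deriv (deriv u) r = -(deriv Θ r / Θ r) * deriv u r - lam * u r := by
      have := hode r hrIcc; linarith
    have hDval : deriv φ r = D r := (hDφ r).deriv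
    rw [hDval]
    have hDval2 : D r = (deriv Θ r * deriv Θ r - deriv (deriv Θ) r * Θ r) / Θ r
        * (u r * deriv u r) := by
      rw [hDdef]
      simp only
      rw [hODE]
      field_simp
      ring
    rw [hDval2]
    have hnum : 0 < (deriv Θ r * deriv Θ r - deriv (deriv Θ) r * Θ r) / Θ r := by
      apply div_pos _ hΘr
      linarith
    exact mul_pos hnum (mul_pos hur hu'r)
  have hmono : StrictMonoOn φ (Set.Icc 0 R) :=
    strictMonoOn_of_deriv_pos (convex_Icc 0 R) hφcont.continuousOn
      (by rw [interior_Icc]; exact hkey)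
  -- derivative of q = u'/u
  set q : ℝ → ℝ := fun r => deriv u r / u r with hqdef
  have hqcont : ContinuousOn q (Set.Icc 0 R) :=
    ContinuousOn.div hu'd.continuous.continuousOn hud.continuous.continuousOn
      (fun x hx => (hupos x hx).ne')
  have hqderiv : ∀ r ∈ Set.Ico (0 : ℝ) R,
      HasDerivAt q (φ r / (Θ r * u r ^ 2)) r := by
    intro r hrIco
    have hrIcc : r ∈ Set.Icc (0 : ℝ) R := ⟨hrIco.1, le_of_lt hrIco.2⟩
    have hΘr : 0 < Θ r := hΘp r hrIco
    have hur : 0 < u r := hupos r hrIcc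
    have h : HasDerivAt (fun y => deriv u y / u y)
        ((deriv (deriv u) r * u r - deriv u r * deriv u r) / u r ^ 2) r :=
      ((hu'd r).hasDerivAt.fun_div (hud r).hasDerivAt hur.ne')
    have hODE : deriv (deriv u) r = -(deriv Θ r / Θ r) * deriv u r - lam * u r := by
      have := hode r hrIcc; linarith
    convert h using 1
    rw [hφdef]
    simp only
    rw [hODE]
    field_simp
  -- φ < 0 on [0, R)
  have hφneg : ∀ r ∈ Set.Ico (0 : ℝ) R, φ r < 0 := by
    intro r1 hr1
    by_contra hcon
    push_neg at hcon
    have hq1mono : StrictMonoOn q (Set.Icc r1 R) := by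
      apply strictMonoOn_of_deriv_pos (convex_Icc r1 R)
        (hqcont.mono (Set.Icc_subset_Icc hr1.1 le_rfl))
      rw [interior_Icc]
      intro x hx
      have hxIco : x ∈ Set.Ico (0 : ℝ) R := ⟨le_trans hr1.1 (le_of_lt hx.1), hx.2⟩
      have hxIcc : x ∈ Set.Icc (0 : ℝ) R := ⟨hxIco.1, le_of_lt hxIco.2⟩
      rw [(hqderiv x hxIco).deriv]
      have hφx : 0 < φ x := by
        have := hmono ⟨hr1.1, le_of_lt hr1.2⟩ hxIcc hx.1
        linarith
      have hΘx : 0 < Θ x := hΘp x hxIco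
      have hux : 0 < u x := hupos x hxIcc
      positivity
    have hlt : q r1 < q R :=
      hq1mono (Set.left_mem_Icc.mpr (le_of_lt hr1.2))
        (Set.right_mem_Icc.mpr (le_of_lt hr1.2)) hr1.2
    have hqR : q R = 0 := by rw [hqdef]; simp [hbR]
    have hq1pos : 0 < q r1 :=
      div_pos (hu' r1 hr1) (hupos r1 ⟨hr1.1, le_of_lt hr1.2⟩)
    rw [hqR] at hlt
    linarith
  -- q strictly decreasing on [0, R]
  have hqanti : StrictAntiOn q (Set.Icc 0 R) := by
    apply strictAntiOn_of_deriv_neg (convex_Icc 0 R) hqcont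
    rw [interior_Icc]
    intro x hx
    have hxIco : x ∈ Set.Ico (0 : ℝ) R := ⟨le_of_lt hx.1, hx.2⟩
    have hxIcc : x ∈ Set.Icc (0 : ℝ) R := ⟨hxIco.1, le_of_lt hxIco.2⟩
    rw [(hqderiv x hxIco).deriv]
    have hφx := hφneg x hxIco
    have hΘx : 0 < Θ x := hΘp x hxIco
    have hux : 0 < u x := hupos x hxIcc
    apply div_neg_of_neg_of_pos hφx
    positivity
  -- conclusion
  have hq0 : q 0 = σ := by
    have h0 : u 0 ≠ 0 := (hupos 0 ⟨le_rfl, le_of_lt hR⟩).ne'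
    show deriv u 0 / u 0 = σ
    rw [hb0, mul_div_assoc, div_self h0, mul_one]
  intro r hr
  constructor
  · rcases eq_or_lt_of_le hr.2 with hrR | hrR
    · rw [hrR]; simp [hbR]
    · exact le_of_lt (div_pos (hu' r ⟨hr.1, hrR⟩) (hupos r hr))
  · rcases eq_or_lt_of_le hr.1 with hr0 | hr0
    · rw [← hr0] at *
      rw [show deriv u 0 / u 0 = q 0 from rfl, hq0]
    · have := hqanti (Set.left_mem_Icc.mpr (le_of_lt hR)) hr hr0
      rw [hq0] at this
      exact le_of_lt this
end
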